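/- arXiv:0707.0771 — 2 statements merged into one kernel-verified Lean document; each statement's English description precedes it below -/
import Mathlib

section
/- Let u(z) = z²·log(|z|²) for z ≠ 0 and u(0) = 0, viewed as a function on the unit disc in ℂ. Then the Wirtinger derivative ∂u/∂z̄ equals z²/z̄ (for z ≠ 0, extended by 0 at 0), which is Lipschitz continuous on the unit disc, whereas ∂u/∂z = 2z·log(|z|²) + z is not Lipschitz continuous in any neighborhood of 0. -/
/-!
Away from `0`, `u = z² log(z z̄)` is smooth, and the product and chain rules give
`du = (2z log|z|² + z) dz + (z²/z̄) dz̄`, so the two Wirtinger derivatives are read off as the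
coefficients of `dz` and `dz̄`. The map `z ↦ z²/z̄` has norm `|z|` and is Lipschitz by a direct
estimate of `z²/z̄ - w²/w̄` over the common denominator `z̄ w̄`. On the positive real axis,
`∂u/∂z (r) = r (4 log r + 1)`, whose difference quotient at `0` is unbounded as `r → 0⁺`.
-/

open Complex Metric

/-- `u z = z² log(|z|²)` for `z ≠ 0`, `u 0 = 0`. -/
noncomputable def optRegExample (z : ℂ) : ℂ :=
  if z = 0 then 0 else z ^ 2 * (Real.log (‖z‖ ^ 2) : ℂ)

/-- The `∂̄`-derivative `z²/z̄` of `optRegExample`, extended by `0` at `0`. -/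
noncomputable def optRegDbar (z : ℂ) : ℂ :=
  if z = 0 then 0 else z ^ 2 / (starRingEnd ℂ z)

/-- The `∂`-derivative `2z log(|z|²) + z` of `optRegExample`. -/
noncomputable def optRegD (z : ℂ) : ℂ :=
  if z = 0 then 0 else 2 * z * (Real.log (‖z‖ ^ 2) : ℂ) + z

open scoped ComplexConjugate

/-- The `ℝ`-linear map `h ↦ a h + b h̄`; every `ℝ`-linear endomorphism of `ℂ` has this form,
with `a` its `∂`-part and `b` its `∂̄`-part. -/
noncomputable def wirtingerCLM (a b : ℂ) : ℂ →L[ℝ] ℂ :=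
  a • 1 + b • (conjCLE : ℂ →L[ℝ] ℂ)

@[simp]
theorem wirtingerCLM_apply (a b h : ℂ) : wirtingerCLM a b h = a * h + b * conj h := by
  simp [wirtingerCLM]

theorem wirtingerCLM_dbar (a b : ℂ) :
    (1 / 2 : ℂ) * (wirtingerCLM a b 1 + I * wirtingerCLM a b I) = b := by
  simp only [wirtingerCLM_apply, map_one, conj_I]
  linear_combination (a - b) / 2 * I_sq

theorem wirtingerCLM_d (a b : ℂ) :
    (1 / 2 : ℂ) * (wirtingerCLM a b 1 - I * wirtingerCLM a b I) = a := by
  simp only [wirtingerCLM_apply, map_one, conj_I]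
  linear_combination (b - a) / 2 * I_sq

theorem ofReal_log_norm_sq (z : ℂ) : (Real.log (‖z‖ ^ 2) : ℂ) = log (z * conj z) := by
  rw [mul_conj, normSq_eq_norm_sq, ofReal_log (by positivity)]

theorem optRegExample_eq (z : ℂ) : optRegExample z = z ^ 2 * log (z * conj z) := by
  rcases eq_or_ne z 0 with rfl | hz
  · simp [optRegExample]
  · rw [optRegExample, if_neg hz, ofReal_log_norm_sq]

theorem optRegDbar_eq (z : ℂ) : optRegDbar z = z ^ 2 / conj z := by
  rcases eq_or_ne z 0 with rfl | hz
  · simp [optRegDbar]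
  · rw [optRegDbar, if_neg hz]

theorem optRegD_eq (z : ℂ) : optRegD z = 2 * z * (Real.log (‖z‖ ^ 2) : ℂ) + z := by
  rcases eq_or_ne z 0 with rfl | hz
  · simp [optRegD]
  · rw [optRegD, if_neg hz]

theorem hasFDerivAt_optRegExample {z : ℂ} (hz : z ≠ 0) :
    HasFDerivAt optRegExample (wirtingerCLM (optRegD z) (optRegDbar z)) z := by
  have hnormSq : HasFDerivAt (fun w : ℂ => w * conj w)
      (z • (conjCLE : ℂ →L[ℝ] ℂ) + conj z • (1 : ℂ →L[ℝ] ℂ)) z :=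
    (hasFDerivAt_id z).mul conjCLE.hasFDerivAt
  have hmem : z * conj z ∈ slitPlane := by
    rw [mul_conj]; exact ofReal_mem_slitPlane.2 (normSq_pos.2 hz)
  have hlog := (hasStrictDerivAt_log hmem).hasDerivAt.comp_hasFDerivAt z hnormSq
  have hu := ((hasFDerivAt_id z).pow 2).mul hlog
  rw [show optRegExample = _ from funext optRegExample_eq]
  refine hu.congr_fderiv ?_
  have hcz : conj z ≠ 0 := (map_ne_zero _).2 hz
  rw [optRegD_eq, optRegDbar_eq, ofReal_log_norm_sq]
  ext h
  simp only [id_eq, Function.comp_apply, Nat.add_one_sub_one, pow_one, nsmul_eq_mul,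
    Nat.cast_ofNat, add_apply, smul_apply, ContinuousLinearEquiv.coe_coe, conjCLE_apply,
    smul_eq_mul, one_apply_eq_self, ContinuousLinearMap.id_apply, wirtingerCLM_apply]
  field_simp
  ring

theorem norm_sq_div_conj_sub_le {z w : ℂ} (hwz : ‖w‖ ≤ ‖z‖) :
    ‖z ^ 2 / conj z - w ^ 2 / conj w‖ ≤ 3 * ‖z - w‖ := by
  rcases eq_or_ne w 0 with rfl | hw
  · rw [map_zero, div_zero, sub_zero, sub_zero, norm_div, norm_pow, RCLike.norm_conj, sq,
      mul_self_div_self]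
    linarith [norm_nonneg z]
  have hz : z ≠ 0 := norm_pos_iff.1 ((norm_pos_iff.2 hw).trans_le hwz)
  have hcz : conj z ≠ 0 := (map_ne_zero _).2 hz
  have hcw : conj w ≠ 0 := (map_ne_zero _).2 hw
  have key : z ^ 2 / conj z - w ^ 2 / conj w =
      (conj w * (z + w) * (z - w) - w ^ 2 * conj (z - w)) / (conj z * conj w) := by
    rw [map_sub]; field_simp; ring
  have hnum :
      ‖conj w * (z + w) * (z - w) - w ^ 2 * conj (z - w)‖ ≤ 3 * ‖z‖ * ‖w‖ * ‖z - w‖ := by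
    calc _ ≤ ‖w‖ * (‖z‖ + ‖w‖) * ‖z - w‖ + ‖w‖ ^ 2 * ‖z - w‖ := by
          refine (norm_sub_le _ _).trans (add_le_add ?_ ?_)
          · rw [norm_mul, norm_mul, RCLike.norm_conj]; gcongr; exact norm_add_le _ _
          · rw [norm_mul, norm_pow, RCLike.norm_conj]
      _ ≤ 3 * ‖z‖ * ‖w‖ * ‖z - w‖ := by
          have hd := mul_nonneg (norm_nonneg w) (norm_nonneg (z - w))
          nlinarith [mul_le_mul_of_nonneg_left hwz hd]
  rw [key, norm_div, norm_mul, RCLike.norm_conj, RCLike.norm_conj, div_le_iff₀ (by positivity)]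
  linarith

theorem lipschitzWith_optRegDbar : LipschitzWith 3 optRegDbar := by
  refine LipschitzWith.of_dist_le_mul fun z w => ?_
  simp only [dist_eq_norm, optRegDbar_eq, NNReal.coe_ofNat]
  rcases le_total ‖w‖ ‖z‖ with hwz | hzw
  · exact norm_sq_div_conj_sub_le hwz
  · rw [norm_sub_rev, norm_sub_rev z]; exact norm_sq_div_conj_sub_le hzw

theorem optRegD_ofReal {r : ℝ} (hr : 0 ≤ r) : optRegD r = (r * (4 * Real.log r + 1) : ℝ) := by
  rw [optRegD_eq, norm_real, Real.norm_of_nonneg hr, Real.log_pow]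
  push_cast; ring

theorem not_lipschitz_optRegD {δ : ℝ} (hδ : 0 < δ) :
    ¬ ∃ K : ℝ, ∀ z w : ℂ, ‖z‖ < δ → ‖w‖ < δ → ‖optRegD z - optRegD w‖ ≤ K * ‖z - w‖ := by
  rintro ⟨K, hK⟩
  obtain ⟨r, hlog, hr, hrδ⟩ : ∃ r : ℝ, 4 * Real.log r + 1 < -K ∧ 0 < r ∧ r < δ := by
    have hsmall :=
      Real.tendsto_log_nhdsGT_zero.eventually (Filter.eventually_lt_atBot ((-K - 1) / 4))
    obtain ⟨r, hr, hrI⟩ := (hsmall.and (Ioo_mem_nhdsGT hδ)).exists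
    exact ⟨r, by linarith, hrI⟩
  have hbound := hK r 0 (by rwa [norm_real, Real.norm_of_nonneg hr.le]) (by simpa using hδ)
  rw [optRegD_ofReal hr.le, show optRegD 0 = 0 from if_pos rfl, sub_zero, sub_zero, norm_real,
    norm_real, Real.norm_of_nonneg hr.le, Real.norm_eq_abs] at hbound
  have := neg_abs_le (r * (4 * Real.log r + 1))
  nlinarith

/-- `∂u/∂z̄ = z²/z̄` is Lipschitz on the unit disc, `∂u/∂z = 2z log(|z|²)+z` is not
Lipschitz on any neighborhood of `0`. -/
theorem optRegExample_claims :
    (∀ z ∈ ball (0 : ℂ) 1, z ≠ 0 → DifferentiableAt ℝ optRegExample z ∧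
      (1 / 2 : ℂ) * (fderiv ℝ optRegExample z 1 + Complex.I * fderiv ℝ optRegExample z Complex.I)
        = optRegDbar z ∧
      (1 / 2 : ℂ) * (fderiv ℝ optRegExample z 1 - Complex.I * fderiv ℝ optRegExample z Complex.I)
        = optRegD z) ∧
    (∃ C : ℝ, ∀ z w : ℂ, z ∈ ball (0 : ℂ) 1 → w ∈ ball (0 : ℂ) 1 →
      ‖optRegDbar z - optRegDbar w‖ ≤ C * ‖z - w‖) ∧
    (∀ δ : ℝ, 0 < δ → ¬ ∃ K : ℝ, ∀ z w : ℂ, ‖z‖ < δ → ‖w‖ < δ →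
      ‖optRegD z - optRegD w‖ ≤ K * ‖z - w‖) := by
  refine ⟨fun z _ hz => ?_, ⟨3, fun z w _ _ => ?_⟩, fun δ hδ => not_lipschitz_optRegD hδ⟩
  · have hu := hasFDerivAt_optRegExample hz
    rw [hu.fderiv]
    exact ⟨hu.differentiableAt, wirtingerCLM_dbar _ _, wirtingerCLM_d _ _⟩
  · simpa only [dist_eq_norm, NNReal.coe_ofNat] using lipschitzWith_optRegDbar.dist_le_mul z w
end

section
/- Let d ≥ 1, let η be a primitive d-th root of unity, and let m be a positive integer divisible by d. Suppose f is a ℂⁿ-valued function defined on a punctured neighborhood of 0 in ℂ such that f(ηz) − f(z) = w·z^m + o(|z|^m) as z → 0, for some vector w ∈ ℂⁿ. Then w = 0. -/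
open Filter Asymptotics Topology

/-!
Write `g z = f (η z) - f z - z ^ m • w`. Summing `g` over the orbit `z, η z, …, η ^ (d - 1) z`,
the `f`-terms telescope to `f (η ^ d z) - f z = 0`, while `(η ^ j z) ^ m = z ^ m` because `η ^ m = 1`;
so `-(d • w) z ^ m = o(|z| ^ m)`, which forces `d • w = 0`.
-/

section PuncturedLittleO

variable {𝕜 E : Type*} [NontriviallyNormedField 𝕜] [NormedAddCommGroup E]

theorem tendsto_const_mul_nhdsNE_zero {c : 𝕜} (hc : c ≠ 0) :
    Tendsto (c * ·) (𝓝[≠] 0) (𝓝[≠] 0) :=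
  (by simpa using (Homeomorph.mulLeft₀ c hc).map_punctured_nhds_eq 0 :
    map (c * ·) (𝓝[≠] 0) = 𝓝[≠] 0).le

theorem Asymptotics.IsLittleO.comp_const_mul {g : 𝕜 → E} {m : ℕ}
    (h : g =o[𝓝[≠] 0] fun z => ‖z‖ ^ m) {c : 𝕜} (hc : c ≠ 0) :
    (fun z => g (c * z)) =o[𝓝[≠] 0] fun z => ‖z‖ ^ m := by
  refine (h.comp_tendsto (tendsto_const_mul_nhdsNE_zero hc)).trans_isBigO ?_
  simpa only [Function.comp_def, norm_mul, mul_pow] using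
    isBigO_const_mul_self (‖c‖ ^ m) (fun z : 𝕜 => ‖z‖ ^ m) _

theorem eq_zero_of_pow_smul_isLittleO [NormedSpace 𝕜 E] {m : ℕ} {v : E}
    (h : (fun z : 𝕜 => z ^ m • v) =o[𝓝[≠] 0] fun z => ‖z‖ ^ m) : v = 0 := by
  by_contra hv
  refine isLittleO_irrefl' (l := 𝓝[≠] (0 : 𝕜)) (f' := fun z => ‖z‖ ^ m) ?_ ?_
  · refine (eventually_mem_nhdsWithin.mono fun z hz => ?_).frequently
    exact norm_ne_zero_iff.mpr (pow_ne_zero _ (norm_ne_zero_iff.mpr hz))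
  · have := h.norm_left
    simp only [norm_smul, norm_pow, mul_comm _ ‖v‖] at this
    exact (isLittleO_const_mul_left_iff (norm_ne_zero_iff.mpr hv)).mp this

end PuncturedLittleO

theorem Finset.sum_range_sub_comp_pow_mul {M G : Type*} [Monoid M] [AddCommGroup G]
    (F : M → G) (η z : M) (d : ℕ) :
    ∑ j ∈ Finset.range d, (F (η * (η ^ j * z)) - F (η ^ j * z)) = F (η ^ d * z) - F z := by
  simpa [← mul_assoc, ← pow_succ'] using Finset.sum_range_sub (fun j => F (η ^ j * z)) d

theorem sum_range_orbit_sub_sub_pow_smul {M G : Type*} [CommMonoid M] [AddCommGroup G]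
    [DistribMulAction M G] (f : M → G) (w : G) {η : M} {d m : ℕ} (hη : η ^ d = 1)
    (hηm : η ^ m = 1) (z : M) :
    ∑ j ∈ Finset.range d, (f (η * (η ^ j * z)) - f (η ^ j * z) - (η ^ j * z) ^ m • w) =
      -(d • z ^ m • w) := by
  have hpow : ∀ j, (η ^ j * z) ^ m = z ^ m := fun j => by
    rw [mul_pow, pow_right_comm, hηm, one_pow, one_mul]
  rw [Finset.sum_sub_distrib, Finset.sum_range_sub_comp_pow_mul, hη, one_mul, sub_self, zero_sub]
  simp only [hpow, Finset.sum_const, Finset.card_range]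

theorem telescoping_root_of_unity_general {n : ℕ} (d : ℕ) (hd : 1 ≤ d) (η : ℂ)
    (hη : η ^ d = 1)
    (m : ℕ) (hdvd : d ∣ m)
    (f : ℂ → Fin n → ℂ) (w : Fin n → ℂ)
    (hasymp : (fun z : ℂ => f (η * z) - f z - z ^ m • w)
      =o[nhdsWithin (0 : ℂ) {0}ᶜ] fun z : ℂ => ‖z‖ ^ m) :
    w = 0 := by
  have hη0 : η ≠ 0 := (IsUnit.of_pow_eq_one hη (by omega)).ne_zero
  have hηm : η ^ m = 1 := by
    obtain ⟨k, rfl⟩ := hdvd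
    rw [pow_mul, hη, one_pow]
  have horbit := IsLittleO.sum fun j (_ : j ∈ Finset.range d) =>
    hasymp.comp_const_mul (pow_ne_zero j hη0)
  have hsum : ∀ z : ℂ, ∑ j ∈ Finset.range d, (f (η * (η ^ j * z)) - f (η ^ j * z)
      - (η ^ j * z) ^ m • w) = z ^ m • -(d • w) := fun z => by
    rw [sum_range_orbit_sub_sub_pow_smul f w hη hηm, smul_neg, smul_comm]
  have hdw : -(d • w) = 0 :=
    eq_zero_of_pow_smul_isLittleO (horbit.congr_left (by simpa only [Finset.sum_apply] using hsum))
  exact (smul_eq_zero.mp (neg_eq_zero.mp hdw)).resolve_left (by omega)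

/-- Root-of-unity summation: if `η` is a primitive `d`-th root of unity, `d ∣ m`,
`m > 0`, and `f(ηz) − f(z) = w z^m + o(|z|^m)` as `z → 0` on a punctured
neighborhood, then `w = 0`. -/
theorem telescoping_root_of_unity {n : ℕ} (d : ℕ) (hd : 1 ≤ d) (η : ℂ)
    (hη : η ^ d = 1) (hprim : ∀ k : ℕ, 0 < k → k < d → η ^ k ≠ 1)
    (m : ℕ) (hm : 0 < m) (hdvd : d ∣ m)
    (f : ℂ → Fin n → ℂ) (w : Fin n → ℂ)
    (hasymp : (fun z : ℂ => f (η * z) - f z - z ^ m • w)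
      =o[nhdsWithin (0 : ℂ) {0}ᶜ] fun z : ℂ => ‖z‖ ^ m) :
    w = 0 :=
  telescoping_root_of_unity_general d hd η hη m hdvd f w hasymp
end
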